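/- arXiv:1512.04752 — 4 statements merged into one kernel-verified Lean document; each statement's English description precedes it below -/
import Mathlib

section
/- Suppose ξ, ρ : [0, ∞) → ℝ are C² with (ξ')² + (ρ')² = 1, ρ' ≥ 0, ξ' > 0, ξ'' = -ρ'·((n-1)/(1+ρ))·ξ', ξ(0) = ρ(0) = 0, ξ'(0) = 1. Then 1 - (ρ'(t))² = 1/(1+ρ(t))^{2(n-1)} for all t ≥ 0. -/
open Set

/-!
Along the flow, `(1 + ρ)^{2(n-1)} (ξ')²` has derivative
`2(n-1)(1 + ρ)^{2n-3} ρ' (ξ')² + 2(1 + ρ)^{2(n-1)} ξ' ξ''`, which vanishes by the ODE for `ξ''`,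
as long as `1 + ρ ≠ 0`; since `ρ' ≥ 0` and `ρ(0) = 0` we have `1 + ρ ≥ 1` on `[0, ∞)`. So the
quantity keeps its initial value `1`, and `(ξ')² = 1 - (ρ')²` gives the claim.
-/

lemma le_of_deriv_nonneg_on_Ici {f : ℝ → ℝ} {a t : ℝ} (hf : Differentiable ℝ f)
    (hf' : ∀ x, a ≤ x → 0 ≤ deriv f x) (ht : a ≤ t) : f a ≤ f t :=
  monotoneOn_of_deriv_nonneg (convex_Ici a) hf.continuous.continuousOn hf.differentiableOn
    (fun x hx => hf' x (interior_subset hx)) self_mem_Ici ht ht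

lemma eq_of_hasDerivAt_zero_on_Ici {f : ℝ → ℝ} {a t : ℝ} (hf : ∀ x, a ≤ x → HasDerivAt f 0 x)
    (ht : a ≤ t) : f t = f a :=
  constant_of_has_deriv_right_zero
    (fun x hx => (hf x hx.1).continuousAt.continuousWithinAt)
    (fun x hx => (hf x hx.1).hasDerivWithinAt) t ⟨ht, le_rfl⟩

lemma hasDerivAt_one_add_pow_mul_sq_zero {ρ u : ℝ → ℝ} {ρ' u' x : ℝ} (m : ℕ)
    (hρ : HasDerivAt ρ ρ' x) (hu : HasDerivAt u u' x) (hx : 1 + ρ x ≠ 0)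
    (hode : u' = -ρ' * (m / (1 + ρ x)) * u x) :
    HasDerivAt (fun t => (1 + ρ t) ^ (2 * m) * u t ^ 2) 0 x := by
  refine (((hρ.const_add 1).fun_pow (2 * m)).fun_mul (hu.fun_pow 2)).congr_deriv ?_
  rcases m with _ | m
  · simp [hode]
  · rw [hode, show 2 * (m + 1) = (2 * m + 1) + 1 by ring, pow_succ]
    field_simp
    push_cast
    ring

theorem rescaled_first_integral_general (n : ℕ) (hn : 2 ≤ n) (ξ ρ : ℝ → ℝ)
    (hξ : ContDiff ℝ 2 ξ) (hρ : ContDiff ℝ 2 ρ)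
    (hunit : ∀ t : ℝ, 0 ≤ t → (deriv ξ t) ^ 2 + (deriv ρ t) ^ 2 = 1)
    (hρ' : ∀ t : ℝ, 0 ≤ t → 0 ≤ deriv ρ t)
    (hode : ∀ t : ℝ, 0 ≤ t →
      deriv (deriv ξ) t = -(deriv ρ t) * (((n : ℝ) - 1) / (1 + ρ t)) * deriv ξ t)
    (hρ0 : ρ 0 = 0) (hξ'0 : deriv ξ 0 = 1) :
    ∀ t : ℝ, 0 ≤ t → 1 - (deriv ρ t) ^ 2 = 1 / (1 + ρ t) ^ (2 * (n - 1)) := by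
  have hρd : Differentiable ℝ ρ := hρ.differentiable two_ne_zero
  have hρ_pos : ∀ t, 0 ≤ t → 0 < 1 + ρ t := fun t ht => by
    linarith [le_of_deriv_nonneg_on_Ici hρd hρ' ht]
  have hderiv_zero : ∀ x, 0 ≤ x →
      HasDerivAt (fun t => (1 + ρ t) ^ (2 * (n - 1)) * deriv ξ t ^ 2) 0 x := fun x hx =>
    hasDerivAt_one_add_pow_mul_sq_zero (n - 1) (hρd x).hasDerivAt
      (hξ.differentiable_deriv_two x).hasDerivAt (hρ_pos x hx).ne'
      (by rw [hode x hx, Nat.cast_pred (by omega)])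
  intro t ht
  have hinvariant := eq_of_hasDerivAt_zero_on_Ici hderiv_zero ht
  simp only [hρ0, hξ'0, add_zero, one_pow, mul_one] at hinvariant
  rw [← eq_one_div_of_mul_eq_one_right hinvariant]
  linarith [hunit t ht]

/-- First integral of the rescaled profile-curve system:
1 - (ρ')² = 1/(1+ρ)^{2(n-1)} for all t ≥ 0. -/
theorem rescaled_first_integral (n : ℕ) (hn : 2 ≤ n) (ξ ρ : ℝ → ℝ)
    (hξ : ContDiff ℝ 2 ξ) (hρ : ContDiff ℝ 2 ρ)
    (hunit : ∀ t : ℝ, 0 ≤ t → (deriv ξ t) ^ 2 + (deriv ρ t) ^ 2 = 1)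
    (hρ' : ∀ t : ℝ, 0 ≤ t → 0 ≤ deriv ρ t)
    (hξ' : ∀ t : ℝ, 0 ≤ t → 0 < deriv ξ t)
    (hode : ∀ t : ℝ, 0 ≤ t →
      deriv (deriv ξ) t = -(deriv ρ t) * (((n : ℝ) - 1) / (1 + ρ t)) * deriv ξ t)
    (hξ0 : ξ 0 = 0) (hρ0 : ρ 0 = 0) (hξ'0 : deriv ξ 0 = 1) :
    ∀ t : ℝ, 0 ≤ t → 1 - (deriv ρ t) ^ 2 = 1 / (1 + ρ t) ^ (2 * (n - 1)) :=
  rescaled_first_integral_general n hn ξ ρ hξ hρ hunit hρ' hode hρ0 hξ'0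
end

section
/- Let (x, r) solve the λ-hypersurface profile ODE with λ > 0, with x > 0, x' > 0, r' > 0 on an interval where the curve is a graph x = f(r). Then for r_T < r with x' > 0 on (r_T, r), one has x'(s(r)) ≤ (r_T/r)^{n-1} e^{(r² - r_T²)/2} x'(s(r_T)). -/
/-!
With the Gaussian weight `w(ρ) = ρ^(n-1) e^(-ρ²/2)` one has `(w ∘ r)' = (w ∘ r) r' ((n-1)/r - r)`,
so the ODE gives `(x' · w(r))' = -w(r) r' (x r' + λ) ≤ 0`. Hence `x' · w(r)` decreases along the
curve, which is the bound after dividing by `w(r(s))`.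
-/

open Real Set

noncomputable def profileWeight (k : ℕ) (ρ : ℝ) : ℝ := ρ ^ k * exp (-ρ ^ 2 / 2)

lemma profileWeight_pos (k : ℕ) {ρ : ℝ} (hρ : 0 < ρ) : 0 < profileWeight k ρ := by
  unfold profileWeight; positivity

lemma profileWeight_div (k : ℕ) (a b : ℝ) :
    profileWeight k a / profileWeight k b = (a / b) ^ k * exp ((b ^ 2 - a ^ 2) / 2) := by
  rw [profileWeight, profileWeight, mul_div_mul_comm, ← exp_sub, div_pow]
  ring_nf

lemma hasDerivAt_profileWeight (k : ℕ) {ρ : ℝ} (hρ : ρ ≠ 0) :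
    HasDerivAt (profileWeight k) (profileWeight k ρ * (k / ρ - ρ)) ρ := by
  have hexp : HasDerivAt (fun u : ℝ => exp (-u ^ 2 / 2)) (exp (-ρ ^ 2 / 2) * -ρ) ρ := by
    convert (((hasDerivAt_pow 2 ρ).fun_neg).div_const 2).exp using 1
    push_cast; ring
  refine ((hasDerivAt_pow k ρ).fun_mul hexp).congr_deriv ?_
  rcases k with _ | k
  · simp [profileWeight]
  · rw [profileWeight, Nat.add_sub_cancel, pow_succ]
    field_simp
    push_cast
    ring

lemma antitoneOn_mul_profileWeight_comp (k : ℕ) {f r : ℝ → ℝ} {a b : ℝ}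
    (hf : Differentiable ℝ f) (hr : Differentiable ℝ r) (hrpos : ∀ t ∈ Icc a b, 0 < r t)
    (hineq : ∀ t ∈ Ioo a b, deriv f t + deriv r t * (k / r t - r t) * f t ≤ 0) :
    AntitoneOn (fun t => f t * profileWeight k (r t)) (Icc a b) := by
  have hderiv : ∀ t ∈ Icc a b, HasDerivAt (fun t => f t * profileWeight k (r t))
      (profileWeight k (r t) * (deriv f t + deriv r t * (k / r t - r t) * f t)) t := by
    intro t ht
    have hw := (hasDerivAt_profileWeight k (hrpos t ht).ne').comp t (hr t).hasDerivAt
    refine ((hf t).hasDerivAt.mul hw).congr_deriv ?_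
    rw [Function.comp_apply]
    ring
  refine antitoneOn_of_deriv_nonpos (convex_Icc a b)
    (fun t ht => (hderiv t ht).continuousAt.continuousWithinAt)
    (fun t ht => (hderiv t (interior_subset ht)).differentiableAt.differentiableWithinAt)
    fun t ht => ?_
  rw [interior_Icc] at ht
  have ht' := Ioo_subset_Icc_self ht
  rw [(hderiv t ht').deriv]
  exact mul_nonpos_of_nonneg_of_nonpos (profileWeight_pos k (hrpos t ht')).le (hineq t ht)

theorem weighted_derivative_bound_general (n : ℕ) (hn : 2 ≤ n) (lam : ℝ) (hlam : 0 < lam)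
    (x r : ℝ → ℝ) (hx : ContDiff ℝ 2 x) (hr : ContDiff ℝ 2 r)
    (sT s : ℝ) (hs : sT ≤ s)
    (hode : ∀ t ∈ Set.Icc sT s, -(deriv (deriv x) t) =
      deriv r t * (x t * deriv r t + (((n : ℝ) - 1) / r t - r t) * deriv x t + lam))
    (hxpos : ∀ t ∈ Set.Icc sT s, 0 < x t)
    (hr' : ∀ t ∈ Set.Icc sT s, 0 < deriv r t)
    (hrpos : ∀ t ∈ Set.Icc sT s, 0 < r t) :
    deriv x s ≤ (r sT / r s) ^ (n - 1) * Real.exp (((r s) ^ 2 - (r sT) ^ 2) / 2) * deriv x sT := by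
  have hcast : ((n - 1 : ℕ) : ℝ) = (n : ℝ) - 1 := by
    rw [Nat.cast_sub (by omega), Nat.cast_one]
  have hdecay : ∀ t ∈ Ioo sT s,
      deriv (deriv x) t + deriv r t * (((n - 1 : ℕ) : ℝ) / r t - r t) * deriv x t ≤ 0 := by
    intro t ht
    have ht' := Ioo_subset_Icc_self ht
    have hforce : 0 < deriv r t * (x t * deriv r t + lam) :=
      mul_pos (hr' t ht') (add_pos (mul_pos (hxpos t ht') (hr' t ht')) hlam)
    rw [hcast]
    linarith [hode t ht']
  have hdx : Differentiable ℝ (deriv x) := (hx.iterate_deriv' 1 1).differentiable one_ne_zero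
  have hmono := antitoneOn_mul_profileWeight_comp (n - 1) hdx (hr.differentiable (by norm_num))
    hrpos hdecay (left_mem_Icc.mpr hs) (right_mem_Icc.mpr hs) hs
  rw [← profileWeight_div, div_mul_eq_mul_div,
    le_div_iff₀ (profileWeight_pos _ (hrpos s (right_mem_Icc.mpr hs)))]
  linarith

/-- Gaussian-weighted derivative bound: on an interval where
x > 0, x' > 0, r' > 0 and the profile curve solves the λ-hypersurface ODE
(λ > 0), one has x'(s) ≤ (r(s_T)/r(s))^{n-1} e^{(r(s)² - r(s_T)²)/2} x'(s_T). -/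
theorem weighted_derivative_bound (n : ℕ) (hn : 2 ≤ n) (lam : ℝ) (hlam : 0 < lam)
    (x r : ℝ → ℝ) (hx : ContDiff ℝ 2 x) (hr : ContDiff ℝ 2 r)
    (sT s : ℝ) (hs : sT ≤ s)
    (hunit : ∀ t ∈ Set.Icc sT s, (deriv x t) ^ 2 + (deriv r t) ^ 2 = 1)
    (hode : ∀ t ∈ Set.Icc sT s, -(deriv (deriv x) t) =
      deriv r t * (x t * deriv r t + (((n : ℝ) - 1) / r t - r t) * deriv x t + lam))
    (hxpos : ∀ t ∈ Set.Icc sT s, 0 < x t)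
    (hx' : ∀ t ∈ Set.Icc sT s, 0 < deriv x t)
    (hr' : ∀ t ∈ Set.Icc sT s, 0 < deriv r t)
    (hrpos : ∀ t ∈ Set.Icc sT s, 0 < r t) :
    deriv x s ≤ (r sT / r s) ^ (n - 1) * Real.exp (((r s) ^ 2 - (r sT) ^ 2) / 2) * deriv x sT :=
  weighted_derivative_bound_general n hn lam hlam x r hx hr sT s hs hode hxpos hr' hrpos
end

section
/- Let (x, r) solve the λ-hypersurface profile ODE with λ > 0 on [s₃, s₁], with x'(s₃) = 0, x' < 0 on (s₃, s₁), r' > 0, x ≥ 0, and r ≥ √(n-1) on [s₃, s₁]. Then κ = -x''/r' > λ on (s₃, s₁), and if moreover ∫_{s₃}^{s₁} κ ds ≤ π/2 then r(s₁) ≤ r(s₃) + π/(2λ). -/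
/-!
Past `r = √(n-1)` the coefficient `(n-1)/r - r` is negative, so against `x' < 0` the term
`((n-1)/r - r) x'` of the ODE is positive; together with `x r' ≥ 0` this gives `κ > λ`.
Integrating, `λ (s₁ - s₃) ≤ ∫ κ ≤ π/2`, and on a unit-speed curve `r` rises by at most the
arc length `s₁ - s₃`.
-/

open Set

theorem div_sub_self_neg_of_sqrt_lt {a ρ : ℝ} (h : √a < ρ) : a / ρ - ρ < 0 := by
  have hρ : 0 < ρ := (Real.sqrt_nonneg a).trans_lt h
  rw [sub_neg, div_lt_iff₀ hρ, ← sq]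
  exact (Real.sqrt_lt' hρ).1 h

theorem lt_neg_div_of_profile_eq {n lam x x' x'' r r' : ℝ}
    (hode : -x'' = r' * (x * r' + ((n - 1) / r - r) * x' + lam))
    (hr' : 0 < r') (hx : 0 ≤ x) (hx' : x' < 0) (hr : √(n - 1) < r) :
    lam < -x'' / r' := by
  have hκ : -x'' / r' = x * r' + ((n - 1) / r - r) * x' + lam := by
    rw [hode, mul_div_cancel_left₀ _ hr'.ne']
  have hrot : 0 < ((n - 1) / r - r) * x' :=
    mul_pos_of_neg_of_neg (div_sub_self_neg_of_sqrt_lt hr) hx'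
  have hx_r' : 0 ≤ x * r' := mul_nonneg hx hr'.le
  linarith

theorem mul_sub_le_integral_of_le_Ioo {f : ℝ → ℝ} {a b c : ℝ} (hab : a ≤ b)
    (hf : IntervalIntegrable f MeasureTheory.volume a b) (h : ∀ s ∈ Ioo a b, c ≤ f s) :
    c * (b - a) ≤ ∫ s in a..b, f s := by
  simpa [mul_comm] using
    intervalIntegral.integral_mono_on_of_le_Ioo hab intervalIntegrable_const hf h

theorem sub_le_sub_of_sq_deriv_add_sq_deriv_eq_one {x r : ℝ → ℝ} {a b : ℝ} (hab : a ≤ b)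
    (hr : ContinuousOn r (Icc a b)) (hr' : DifferentiableOn ℝ r (Ioo a b))
    (hunit : ∀ s ∈ Ioo a b, deriv x s ^ 2 + deriv r s ^ 2 = 1) :
    r b - r a ≤ b - a := by
  have hle : ∀ s ∈ interior (Icc a b), deriv r s ≤ 1 := by
    intro s hs
    rw [interior_Icc] at hs
    nlinarith [hunit s hs, sq_nonneg (deriv x s)]
  simpa using (convex_Icc a b).image_sub_le_mul_sub_of_deriv_le hr (by rwa [interior_Icc]) hle
    a (left_mem_Icc.2 hab) b (right_mem_Icc.2 hab) hab

theorem descending_arc_bound_general (n : ℕ) (lam : ℝ) (hlam : 0 < lam)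
    (x r : ℝ → ℝ) (hx : ContDiff ℝ 2 x) (hr : ContDiff ℝ 2 r)
    (s₃ s₁ : ℝ) (hs : s₃ ≤ s₁)
    (hunit : ∀ s ∈ Set.Icc s₃ s₁, (deriv x s) ^ 2 + (deriv r s) ^ 2 = 1)
    (hode : ∀ s ∈ Set.Icc s₃ s₁, -(deriv (deriv x) s) =
      deriv r s * (x s * deriv r s + (((n : ℝ) - 1) / r s - r s) * deriv x s + lam))
    (hx' : ∀ s ∈ Set.Ioo s₃ s₁, deriv x s < 0)
    (hr' : ∀ s ∈ Set.Icc s₃ s₁, 0 < deriv r s)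
    (hxpos : ∀ s ∈ Set.Icc s₃ s₁, 0 ≤ x s)
    (hrbig : ∀ s ∈ Set.Icc s₃ s₁, Real.sqrt ((n : ℝ) - 1) ≤ r s) :
    (∀ s ∈ Set.Ioo s₃ s₁, lam < -(deriv (deriv x) s) / deriv r s) ∧
    ((∫ s in s₃..s₁, -(deriv (deriv x) s) / deriv r s) ≤ Real.pi / 2 →
      r s₁ ≤ r s₃ + Real.pi / (2 * lam)) := by
  have hs₃ : s₃ ∈ Icc s₃ s₁ := left_mem_Icc.2 hs
  have hr_mono : StrictMonoOn r (Icc s₃ s₁) :=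
    strictMonoOn_of_deriv_pos (convex_Icc s₃ s₁) hr.continuous.continuousOn
      fun s hs => hr' s (interior_subset hs)
  have hκ : ∀ s ∈ Ioo s₃ s₁, lam < -(deriv (deriv x) s) / deriv r s := by
    intro s hs
    have hs' := Ioo_subset_Icc_self hs
    exact lt_neg_div_of_profile_eq (hode s hs') (hr' s hs') (hxpos s hs') (hx' s hs)
      ((hrbig s₃ hs₃).trans_lt (hr_mono hs₃ hs' hs.1))
  refine ⟨hκ, fun hint => ?_⟩
  have hκ_int : IntervalIntegrable (fun s => -(deriv (deriv x) s) / deriv r s)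
      MeasureTheory.volume s₃ s₁ := by
    refine ContinuousOn.intervalIntegrable ?_
    rw [uIcc_of_le hs]
    exact ((hx.deriv' (n := 1)).continuous_deriv le_rfl).neg.continuousOn.div
      (hr.continuous_deriv one_le_two).continuousOn fun s hs => (hr' s hs).ne'
  have hlen : lam * (s₁ - s₃) ≤ Real.pi / 2 :=
    (mul_sub_le_integral_of_le_Ioo hs hκ_int fun s hs => (hκ s hs).le).trans hint
  have hrise : r s₁ - r s₃ ≤ s₁ - s₃ :=
    sub_le_sub_of_sq_deriv_add_sq_deriv_eq_one hs hr.continuous.continuousOn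
      (hr.differentiable two_ne_zero).differentiableOn fun s hs => hunit s (Ioo_subset_Icc_self hs)
  have hlen' : s₁ - s₃ ≤ Real.pi / (2 * lam) := by
    rw [le_div_iff₀ (by positivity)]
    linarith
  linarith

/-- On [s₃, s₁] with x'(s₃) = 0, x' < 0 on (s₃, s₁), r' > 0, x ≥ 0
and r ≥ √(n-1), the curvature κ = -x''/r' of a λ-hypersurface profile curve
(λ > 0) exceeds λ; if moreover ∫ κ ≤ π/2 then r(s₁) ≤ r(s₃) + π/(2λ). -/
theorem descending_arc_bound (n : ℕ) (hn : 2 ≤ n) (lam : ℝ) (hlam : 0 < lam)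
    (x r : ℝ → ℝ) (hx : ContDiff ℝ 2 x) (hr : ContDiff ℝ 2 r)
    (s₃ s₁ : ℝ) (hs : s₃ ≤ s₁)
    (hunit : ∀ s ∈ Set.Icc s₃ s₁, (deriv x s) ^ 2 + (deriv r s) ^ 2 = 1)
    (hode : ∀ s ∈ Set.Icc s₃ s₁, -(deriv (deriv x) s) =
      deriv r s * (x s * deriv r s + (((n : ℝ) - 1) / r s - r s) * deriv x s + lam))
    (hx'3 : deriv x s₃ = 0)
    (hx' : ∀ s ∈ Set.Ioo s₃ s₁, deriv x s < 0)
    (hr' : ∀ s ∈ Set.Icc s₃ s₁, 0 < deriv r s)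
    (hxpos : ∀ s ∈ Set.Icc s₃ s₁, 0 ≤ x s)
    (hrbig : ∀ s ∈ Set.Icc s₃ s₁, Real.sqrt ((n : ℝ) - 1) ≤ r s) :
    (∀ s ∈ Set.Ioo s₃ s₁, lam < -(deriv (deriv x) s) / deriv r s) ∧
    ((∫ s in s₃..s₁, -(deriv (deriv x) s) / deriv r s) ≤ Real.pi / 2 →
      r s₁ ≤ r s₃ + Real.pi / (2 * lam)) :=
  descending_arc_bound_general n lam hlam x r hx hr s₃ s₁ hs hunit hode hx' hr' hxpos hrbig
end

section
/- Let (x, r) solve the λ-hypersurface profile ODE with λ > 0, and suppose on [s₅, s₁] that x' ≤ x'(s₅) = -sin(1/√R) < 0 where R = r(s₅) and r ≥ R ≥ √(n-1) is large, x ≥ 0, r' > 0. If sin(1/√R) > 1/(2√R) and (n-1)/R · sin(1/√R) < √R/4, then κ(s) > √R/4 on [s₅, s₁], and if the total turning on [s₅, s₁] is at most π/2 then s₁ - s₅ < 2π/√R. -/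
/-! On `[s₅, s₁]` the curvature of the profile is `κ = x r' + ((n-1)/r - r) x' + λ`. The first and
last terms are nonnegative, and since `t ↦ t - (n-1)/t` is increasing while `-x' ≥ sin(1/√R)`, the
middle term is at least `(R - (n-1)/R) sin(1/√R) > √R/2 - √R/4`. Integrating `κ > √R/4` against a
total turning of at most `π/2` bounds the length of the interval by `2π/√R`. -/

open Set

lemma pos_of_one_div_two_sqrt_lt_sin {R : ℝ}
    (h : 1 / (2 * Real.sqrt R) < Real.sin (1 / Real.sqrt R)) : 0 < R := by
  by_contra! hR
  simp [Real.sqrt_eq_zero'.mpr hR] at h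

lemma sub_div_le_sub_div_of_le {c a b : ℝ} (hc : 0 ≤ c) (ha : 0 < a) (hab : a ≤ b) :
    a - c / a ≤ b - c / b := by
  have : c / b ≤ c / a := div_le_div_of_nonneg_left hc ha hab
  linarith

lemma sub_div_mul_le_div_sub_mul {c R r σ p : ℝ} (hc : 0 ≤ c) (hR : 0 < R) (hcR : c ≤ R ^ 2)
    (hRr : R ≤ r) (hσ : 0 ≤ σ) (hp : p ≤ -σ) :
    (R - c / R) * σ ≤ (c / r - r) * p := by
  have hR_nonneg : 0 ≤ R - c / R := by
    rw [sub_nonneg, div_le_iff₀ hR]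
    nlinarith
  calc (R - c / R) * σ ≤ (r - c / r) * -p :=
        mul_le_mul (sub_div_le_sub_div_of_le hc hR hRr) (by linarith) hσ
          (hR_nonneg.trans (sub_div_le_sub_div_of_le hc hR hRr))
    _ = (c / r - r) * p := by ring

lemma sqrt_div_four_lt_sub_div_mul {c R σ : ℝ} (hR : 0 < R) (hσ : 1 / (2 * Real.sqrt R) < σ)
    (hcσ : c / R * σ < Real.sqrt R / 4) :
    Real.sqrt R / 4 < (R - c / R) * σ := by
  have hsqrt : 0 < Real.sqrt R := Real.sqrt_pos.mpr hR
  have hRσ : Real.sqrt R / 2 < R * σ := by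
    calc Real.sqrt R / 2 = R * (1 / (2 * Real.sqrt R)) := by
          field_simp
          rw [Real.sq_sqrt hR.le]
      _ < R * σ := mul_lt_mul_of_pos_left hσ hR
  linarith [show (R - c / R) * σ = R * σ - c / R * σ by ring]

lemma mul_lt_intervalIntegral_of_lt {f : ℝ → ℝ} {a b m : ℝ} (hab : a < b)
    (hf : ContinuousOn f (Icc a b)) (hm : ∀ t ∈ Icc a b, m < f t) :
    (b - a) * m < ∫ t in a..b, f t := by
  have hconst : ∫ _ in a..b, m = (b - a) * m := by simp
  rw [← hconst]
  exact intervalIntegral.integral_lt_integral_of_continuousOn_of_le_of_exists_lt hab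
    continuousOn_const hf (fun t ht => (hm t (Ioc_subset_Icc_self ht)).le)
    ⟨a, left_mem_Icc.mpr hab.le, hm a (left_mem_Icc.mpr hab.le)⟩

theorem large_radius_curvature_bound_general (n : ℕ) (hn : 2 ≤ n) (lam : ℝ) (hlam : 0 < lam)
    (x r : ℝ → ℝ) (hx : ContDiff ℝ 2 x) (hr : ContDiff ℝ 2 r)
    (s₅ s₁ : ℝ) (R : ℝ)
    (hRbig : Real.sqrt ((n : ℝ) - 1) ≤ R)
    (hsin : 1 / (2 * Real.sqrt R) < Real.sin (1 / Real.sqrt R))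
    (hsmall : ((n : ℝ) - 1) / R * Real.sin (1 / Real.sqrt R) < Real.sqrt R / 4)
    (hode : ∀ s ∈ Set.Icc s₅ s₁, -(deriv (deriv x) s) =
      deriv r s * (x s * deriv r s + (((n : ℝ) - 1) / r s - r s) * deriv x s + lam))
    (hx'5 : deriv x s₅ = -Real.sin (1 / Real.sqrt R))
    (hx' : ∀ s ∈ Set.Icc s₅ s₁, deriv x s ≤ deriv x s₅)
    (hrge : ∀ s ∈ Set.Icc s₅ s₁, R ≤ r s)
    (hxpos : ∀ s ∈ Set.Icc s₅ s₁, 0 ≤ x s)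
    (hr' : ∀ s ∈ Set.Icc s₅ s₁, 0 < deriv r s) :
    (∀ s ∈ Set.Icc s₅ s₁, Real.sqrt R / 4 < -(deriv (deriv x) s) / deriv r s) ∧
    ((∫ s in s₅..s₁, -(deriv (deriv x) s) / deriv r s) ≤ Real.pi / 2 →
      s₁ - s₅ < 2 * Real.pi / Real.sqrt R) := by
  have hR : 0 < R := pos_of_one_div_two_sqrt_lt_sin hsin
  have hc : (0 : ℝ) ≤ n - 1 := by
    have : (2 : ℝ) ≤ n := by exact_mod_cast hn
    linarith
  have hcR : (n : ℝ) - 1 ≤ R ^ 2 := (Real.sqrt_le_iff.mp hRbig).2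
  have hsin_pos : 0 < Real.sin (1 / Real.sqrt R) := lt_trans (by positivity) hsin
  have hκ : ∀ s ∈ Icc s₅ s₁, Real.sqrt R / 4 < -(deriv (deriv x) s) / deriv r s := by
    intro s hs
    rw [hode s hs, mul_div_cancel_left₀ _ (hr' s hs).ne']
    have hdrift := sub_div_mul_le_div_sub_mul hc hR hcR (hrge s hs) hsin_pos.le
      (hx'5 ▸ hx' s hs)
    linarith [sqrt_div_four_lt_sub_div_mul hR hsin hsmall,
      mul_nonneg (hxpos s hs) (hr' s hs).le]
  refine ⟨hκ, fun hturn => ?_⟩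
  rcases le_or_gt s₁ s₅ with hle | hlt
  · have : 0 < 2 * Real.pi / Real.sqrt R := by positivity
    linarith
  · have hcont : ContinuousOn (fun s => -(deriv (deriv x) s) / deriv r s) (Icc s₅ s₁) :=
      ((hx.iterate_deriv' 0 2).continuous.neg.continuousOn).div
        (hr.continuous_deriv one_le_two).continuousOn fun s hs => (hr' s hs).ne'
    have hlength := mul_lt_intervalIntegral_of_lt hlt hcont hκ
    rw [lt_div_iff₀ (Real.sqrt_pos.mpr hR)]
    linarith

/-- On [s₅, s₁] with x' ≤ x'(s₅) = -sin(1/√R) < 0, R = r(s₅),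
r ≥ R ≥ √(n-1), x ≥ 0, r' > 0, and with R large enough that
sin(1/√R) > 1/(2√R) and (n-1)/R·sin(1/√R) < √R/4, the curvature satisfies
κ > √R/4 on [s₅, s₁]; if furthermore the total turning is at most π/2 then
s₁ - s₅ < 2π/√R. -/
theorem large_radius_curvature_bound (n : ℕ) (hn : 2 ≤ n) (lam : ℝ) (hlam : 0 < lam)
    (x r : ℝ → ℝ) (hx : ContDiff ℝ 2 x) (hr : ContDiff ℝ 2 r)
    (s₅ s₁ : ℝ) (hs : s₅ ≤ s₁) (R : ℝ) (hR : R = r s₅)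
    (hRbig : Real.sqrt ((n : ℝ) - 1) ≤ R)
    (hsin : 1 / (2 * Real.sqrt R) < Real.sin (1 / Real.sqrt R))
    (hsmall : ((n : ℝ) - 1) / R * Real.sin (1 / Real.sqrt R) < Real.sqrt R / 4)
    (hunit : ∀ s ∈ Set.Icc s₅ s₁, (deriv x s) ^ 2 + (deriv r s) ^ 2 = 1)
    (hode : ∀ s ∈ Set.Icc s₅ s₁, -(deriv (deriv x) s) =
      deriv r s * (x s * deriv r s + (((n : ℝ) - 1) / r s - r s) * deriv x s + lam))
    (hx'5 : deriv x s₅ = -Real.sin (1 / Real.sqrt R))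
    (hx' : ∀ s ∈ Set.Icc s₅ s₁, deriv x s ≤ deriv x s₅)
    (hrge : ∀ s ∈ Set.Icc s₅ s₁, R ≤ r s)
    (hxpos : ∀ s ∈ Set.Icc s₅ s₁, 0 ≤ x s)
    (hr' : ∀ s ∈ Set.Icc s₅ s₁, 0 < deriv r s) :
    (∀ s ∈ Set.Icc s₅ s₁, Real.sqrt R / 4 < -(deriv (deriv x) s) / deriv r s) ∧
    ((∫ s in s₅..s₁, -(deriv (deriv x) s) / deriv r s) ≤ Real.pi / 2 →
      s₁ - s₅ < 2 * Real.pi / Real.sqrt R) :=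
  large_radius_curvature_bound_general n hn lam hlam x r hx hr s₅ s₁ R hRbig hsin hsmall hode hx'5
    hx' hrge hxpos hr'
end
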